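/- arXiv:1411.2520 — 2 statements merged into one kernel-verified Lean document; each statement's English description precedes it below -/
import Mathlib

section
/- Let G be a profinite group, H an open normal subgroup, and g ∈ G an element of pro-p order (i.e., the closure of the subgroup generated by g is a pro-p group) normalizing H. Let (η, V) be a finite-dimensional irreducible representation of H over an algebraically closed field of characteristic 0 with open kernel, such that η(g x g^{-1}) ≅ η for all x ∈ H. Then there exists an irreducible representation η̃ of the closed subgroup generated by H and g, with open kernel, such that η̃ restricted to H is isomorphic to η. Moreover the extending operator η̃(g) can be chosen of finite p-power order. -/
/-!
By Schur's lemma the intertwiner `A` between `η` and `η (g · g⁻¹)` is unique up to a scalar.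
If `n` is the order of `g` modulo `H`, both `A ^ n` and `η (g ^ n)` intertwine `η` with
`η (g ^ n · g ^ (-n))`, so they differ by a scalar `c`; rescaling `A` by an `n`-th root of `c⁻¹`
gives `A ^ j = η (g ^ j)` whenever `g ^ j ∈ H`. Then `(h, j) ↦ η h * A ^ j` on `H ⋊ ℤ` kills the
kernel of `(h, j) ↦ h * g ^ j`, so it descends to the subgroup generated by `H` and `g`, which is
open and hence closed. Finally the closure of `⟨g⟩` is abelian and pro-`p`, so some `g ^ p ^ m`
lies in the open subgroup `ker η`, whence `A ^ p ^ m = η (g ^ p ^ m) = 1`.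
-/

theorem MonoidHom.map_zpow_apply_eq_of_map_apply_eq {H M : Type*} [Group H] [Group M]
    (η : H →* M) {σ : MulAut H} {τ : MulAut M} (h : ∀ x, η (σ x) = τ (η x)) (j : ℤ) (x : H) :
    η ((σ ^ j) x) = (τ ^ j) (η x) := by
  induction j using Int.induction_on generalizing x with
  | zero => rfl
  | succ j ih => rw [zpow_add_one, zpow_add_one, MulAut.mul_apply, MulAut.mul_apply, ih, h]
  | pred j ih =>
    obtain ⟨y, rfl⟩ := σ.surjective x
    rw [zpow_sub_one, zpow_sub_one, MulAut.mul_apply, MulAut.mul_apply, MulAut.inv_apply_self,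
      ih, h, MulAut.inv_apply_self]

theorem MulAut.conjNormal_coe {G : Type*} [Group G] {H : Subgroup G} [H.Normal] (h : H) :
    MulAut.conjNormal (h : G) = MulAut.conj h := by
  ext x
  simp [MulAut.conjNormal_apply]

theorem Units.commute_map_algebraMap {k R : Type*} [CommSemiring k] [Semiring R] [Algebra k R]
    (c : kˣ) (u : Rˣ) : Commute (Units.map (algebraMap k R : k →* R) c) u :=
  Units.ext (Algebra.commutes (c : k) (u : R))

section Schur

variable {k V : Type*} [Field k] [IsAlgClosed k] [AddCommGroup V] [Module k V]
  [FiniteDimensional k V]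

theorem Module.End.exists_eq_algebraMap_of_forall_commute {ι : Type*} (ρ : ι → Module.End k V)
    (hρ : ∀ W : Submodule k V, (∀ i v, v ∈ W → ρ i v ∈ W) → W = ⊥ ∨ W = ⊤)
    (T : Module.End k V) (hT : ∀ i, Commute T (ρ i)) :
    ∃ c : k, T = algebraMap k (Module.End k V) c := by
  rcases subsingleton_or_nontrivial V with hV | hV
  · exact ⟨0, Subsingleton.elim _ _⟩
  obtain ⟨c, hc⟩ := Module.End.exists_eigenvalue T
  have hinv : ∀ i v, v ∈ T.eigenspace c → ρ i v ∈ T.eigenspace c := by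
    intro i v hv
    rw [Module.End.mem_eigenspace_iff] at hv ⊢
    rw [← Module.End.mul_apply, (hT i).eq, Module.End.mul_apply, hv, map_smul]
  refine ⟨c, LinearMap.ext fun v => ?_⟩
  have hv : v ∈ T.eigenspace c := by
    rw [(hρ _ hinv).resolve_left hc]
    trivial
  simpa [Module.algebraMap_end_apply] using Module.End.mem_eigenspace_iff.mp hv

theorem Module.End.exists_units_eq_map_algebraMap_of_forall_commute {ι : Type*}
    (ρ : ι → Module.End k V)
    (hρ : ∀ W : Submodule k V, (∀ i v, v ∈ W → ρ i v ∈ W) → W = ⊥ ∨ W = ⊤)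
    (T : (Module.End k V)ˣ) (hT : ∀ i, Commute (T : Module.End k V) (ρ i)) :
    ∃ c : kˣ, T = Units.map (algebraMap k (Module.End k V) : k →* Module.End k V) c := by
  obtain ⟨c, hc⟩ := exists_eq_algebraMap_of_forall_commute ρ hρ T hT
  by_cases h0 : c = 0
  · rw [h0, map_zero] at hc
    have : Subsingleton (Module.End k V) :=
      subsingleton_of_zero_eq_one (isUnit_zero_iff.mp (hc ▸ T.isUnit))
    exact ⟨1, Subsingleton.elim _ _⟩
  · exact ⟨Units.mk0 c h0, Units.ext hc⟩

theorem exists_intertwiner_pow_eq_of_pow_eq_conj {H : Type*} [Group H]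
    (η : H →* (Module.End k V)ˣ)
    (hη : ∀ W : Submodule k V,
      (∀ (h : H) (v : V), v ∈ W → (η h : Module.End k V) v ∈ W) → W = ⊥ ∨ W = ⊤)
    {σ : MulAut H} {A₀ : (Module.End k V)ˣ} (hA₀ : ∀ x, η (σ x) = MulAut.conj A₀ (η x))
    {n : ℕ} (hn : n ≠ 0) {e : H} (he : σ ^ n = MulAut.conj e) :
    ∃ A, (∀ x, η (σ x) = MulAut.conj A (η x)) ∧ A ^ n = η e := by
  have hconj : ∀ x, η e * η x * (η e)⁻¹ = A₀ ^ n * η x * (A₀ ^ n)⁻¹ := fun x => by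
    simpa [he, ← map_pow] using η.map_zpow_apply_eq_of_map_apply_eq hA₀ n x
  have hcomm : ∀ x, Commute ((η e)⁻¹ * A₀ ^ n) (η x) := fun x => by
    calc (η e)⁻¹ * A₀ ^ n * η x = (η e)⁻¹ * (A₀ ^ n * η x * (A₀ ^ n)⁻¹) * A₀ ^ n := by group
    _ = (η e)⁻¹ * (η e * η x * (η e)⁻¹) * A₀ ^ n := by rw [hconj]
    _ = η x * ((η e)⁻¹ * A₀ ^ n) := by group
  obtain ⟨c, hc⟩ := Module.End.exists_units_eq_map_algebraMap_of_forall_commute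
    (fun x => (η x : Module.End k V)) hη _ fun x => (hcomm x).units_val
  obtain ⟨d, hd⟩ := IsAlgClosed.exists_pow_nat_eq (c⁻¹ : kˣ).val (Nat.pos_of_ne_zero hn)
  have hd0 : d ≠ 0 := by
    rintro rfl
    exact (c⁻¹).ne_zero (by rw [← hd, zero_pow hn])
  have hdc : Units.mk0 d hd0 ^ n = c⁻¹ := Units.ext (by simpa using hd)
  set s := Units.map (algebraMap k (Module.End k V) : k →* Module.End k V) (Units.mk0 d hd0)
  refine ⟨s * A₀, fun x => ?_, ?_⟩
  · rw [hA₀, map_mul, MulAut.mul_apply, MulAut.conj_apply s,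
      (Units.commute_map_algebraMap _ _).eq, mul_inv_cancel_right]
  · rw [(Units.commute_map_algebraMap _ _).mul_pow, ← map_pow, hdc, inv_mul_eq_iff_eq_mul.mp hc,
      ← (Units.commute_map_algebraMap c (η e)).eq, map_inv, inv_mul_cancel_left]

end Schur

section Extension

variable {G M : Type*} [Group G] [Group M] {H : Subgroup G} [H.Normal] {g : G}

abbrev zpowersConjNormal (H : Subgroup G) [H.Normal] (g : G) : Multiplicative ℤ →* MulAut H :=
  MulAut.conjNormal.comp (zpowersHom G g)

def semidirectZPowersLift (η : H →* M) (A : M)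
    (hA : ∀ x, η (MulAut.conjNormal g x) = MulAut.conj A (η x)) :
    H ⋊[zpowersConjNormal H g] Multiplicative ℤ →* M :=
  SemidirectProduct.lift η (zpowersHom M A) fun j => by
    ext x
    simpa [map_zpow] using η.map_zpow_apply_eq_of_map_apply_eq hA j.toAdd x

theorem semidirectZPowersLift_apply (η : H →* M) (A : M)
    (hA : ∀ x, η (MulAut.conjNormal g x) = MulAut.conj A (η x))
    (x : H ⋊[zpowersConjNormal H g] Multiplicative ℤ) :
    semidirectZPowersLift η A hA x = η x.left * A ^ x.right.toAdd := rfl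

abbrev semidirectZPowersHom (H : Subgroup G) [H.Normal] (g : G) :
    H ⋊[zpowersConjNormal H g] Multiplicative ℤ →* G :=
  semidirectZPowersLift H.subtype g fun x => MulAut.conjNormal_apply g x

theorem semidirectZPowersHom_apply (x : H ⋊[zpowersConjNormal H g] Multiplicative ℤ) :
    semidirectZPowersHom H g x = x.left * g ^ x.right.toAdd := rfl

theorem range_semidirectZPowersHom :
    (semidirectZPowersHom H g).range = Subgroup.closure ((H : Set G) ∪ {g}) := by
  apply le_antisymm
  · rintro _ ⟨x, rfl⟩
    have hH : (x.left : G) ∈ Subgroup.closure ((H : Set G) ∪ {g}) :=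
      Subgroup.subset_closure (Set.mem_union_left _ x.left.2)
    have hg : g ∈ Subgroup.closure ((H : Set G) ∪ {g}) :=
      Subgroup.subset_closure (Set.mem_union_right _ rfl)
    exact mul_mem hH (zpow_mem hg _)
  · rw [Subgroup.closure_le]
    rintro x (hx | rfl)
    · exact ⟨SemidirectProduct.inl ⟨x, hx⟩, by simp [semidirectZPowersHom_apply]⟩
    · exact ⟨SemidirectProduct.inr (Multiplicative.ofAdd 1), by simp [semidirectZPowersHom_apply]⟩

theorem ker_semidirectZPowersHom_le (η : H →* M) (A : M)
    (hA : ∀ x, η (MulAut.conjNormal g x) = MulAut.conj A (η x))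
    (hpow : ∀ (j : ℤ) (hj : g ^ j ∈ H), η ⟨g ^ j, hj⟩ = A ^ j) :
    (semidirectZPowersHom H g).ker ≤ (semidirectZPowersLift η A hA).ker := by
  rintro ⟨x, j⟩ hx
  rw [MonoidHom.mem_ker, semidirectZPowersHom_apply] at hx
  rw [MonoidHom.mem_ker, semidirectZPowersLift_apply]
  have hxj : (x : G) = g ^ (-j.toAdd) := by
    rw [zpow_neg, ← mul_eq_one_iff_eq_inv]
    exact hx
  have hmem : g ^ (-j.toAdd) ∈ H := hxj ▸ x.2
  rw [show x = ⟨_, hmem⟩ from Subtype.ext hxj, hpow, zpow_neg, inv_mul_cancel]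

theorem exists_extension_to_closure_union_singleton (η : H →* M) (A : M)
    (hA : ∀ x, η (MulAut.conjNormal g x) = MulAut.conj A (η x))
    (hpow : ∀ (j : ℤ) (hj : g ^ j ∈ H), η ⟨g ^ j, hj⟩ = A ^ j) :
    ∃ ψ : Subgroup.closure ((H : Set G) ∪ {g}) →* M,
      (∀ x : H, ψ ⟨x, Subgroup.subset_closure (Set.mem_union_left _ x.2)⟩ = η x) ∧
        ψ ⟨g, Subgroup.subset_closure (Set.mem_union_right _ rfl)⟩ = A := by
  let Φ := semidirectZPowersHom H g
  let ψ₀ := Φ.rangeRestrict.liftOfSurjective Φ.rangeRestrict_surjective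
    ⟨semidirectZPowersLift η A hA, by
      rw [MonoidHom.ker_rangeRestrict]
      exact ker_semidirectZPowersHom_le η A hA hpow⟩
  have hψ₀ : ∀ y, ψ₀ (Φ.rangeRestrict y) = semidirectZPowersLift η A hA y :=
    MonoidHom.liftOfRightInverse_comp_apply _ _ _ _
  refine ⟨ψ₀.comp (Subgroup.inclusion range_semidirectZPowersHom.ge), fun x => ?_, ?_⟩
  · refine (congrArg ψ₀ (Subtype.ext ?_)).trans ((hψ₀ (SemidirectProduct.inl x)).trans ?_)
    · simp [Φ, semidirectZPowersHom_apply]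
    · simp [semidirectZPowersLift_apply]
  · refine (congrArg ψ₀ (Subtype.ext ?_)).trans
      ((hψ₀ (SemidirectProduct.inr (Multiplicative.ofAdd 1))).trans ?_)
    · simp [Φ, semidirectZPowersHom_apply]
    · simp [semidirectZPowersLift_apply]

theorem map_zpow_eq_of_pow_orderOf_eq (η : H →* M) {A : M} {e : H}
    (he : (e : G) = g ^ orderOf (g : G ⧸ H)) (hA : A ^ orderOf (g : G ⧸ H) = η e)
    (j : ℤ) (hj : g ^ j ∈ H) : η ⟨g ^ j, hj⟩ = A ^ j := by
  have hdvd : (orderOf (g : G ⧸ H) : ℤ) ∣ j := by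
    rwa [orderOf_dvd_iff_zpow_eq_one, ← QuotientGroup.mk_zpow, QuotientGroup.eq_one_iff]
  obtain ⟨t, rfl⟩ := hdvd
  have : (⟨g ^ (orderOf (g : G ⧸ H) * t : ℤ), hj⟩ : H) = e ^ t := by
    ext
    change g ^ ((orderOf (g : G ⧸ H) : ℤ) * t) = (e : G) ^ t
    rw [he, zpow_mul, zpow_natCast]
  rw [this, map_zpow, zpow_mul, zpow_natCast, hA]

end Extension

theorem exists_intertwiner_map_zpow_eq {k V G : Type*} [Field k] [IsAlgClosed k]
    [AddCommGroup V] [Module k V] [FiniteDimensional k V] [Group G] {H : Subgroup G} [H.Normal]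
    (η : H →* (Module.End k V)ˣ)
    (hη : ∀ W : Submodule k V,
      (∀ (h : H) (v : V), v ∈ W → (η h : Module.End k V) v ∈ W) → W = ⊥ ∨ W = ⊤)
    {g : G} {A₀ : (Module.End k V)ˣ}
    (hA₀ : ∀ x, η (MulAut.conjNormal g x) = MulAut.conj A₀ (η x))
    {N : ℕ} (hN : N ≠ 0) (hgN : g ^ N ∈ H) :
    ∃ A, (∀ x, η (MulAut.conjNormal g x) = MulAut.conj A (η x)) ∧
      ∀ (j : ℤ) (hj : g ^ j ∈ H), η ⟨g ^ j, hj⟩ = A ^ j := by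
  have hn : orderOf (g : G ⧸ H) ≠ 0 := ne_zero_of_dvd_ne_zero hN <| orderOf_dvd_of_pow_eq_one <| by
    rwa [← QuotientGroup.mk_pow, QuotientGroup.eq_one_iff]
  have he : g ^ orderOf (g : G ⧸ H) ∈ H := by
    rw [← QuotientGroup.eq_one_iff, QuotientGroup.mk_pow, pow_orderOf_eq_one]
  obtain ⟨A, hA, hAn⟩ := exists_intertwiner_pow_eq_of_pow_eq_conj η hη hA₀ hn (e := ⟨_, he⟩)
    (by rw [← MonoidHom.map_pow, MulAut.conjNormal_coe ⟨_, he⟩])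
  exact ⟨A, hA, map_zpow_eq_of_pow_orderOf_eq η rfl hAn⟩

theorem exists_pow_pow_mem_of_isOpen {G : Type*} [Group G] [TopologicalSpace G]
    [IsTopologicalGroup G] [T2Space G] {p : ℕ} {g : G}
    (hproP : ∀ U : Subgroup ((Subgroup.zpowers g).topologicalClosure),
      IsOpen (U : Set ((Subgroup.zpowers g).topologicalClosure)) → U.Normal →
        ∃ m : ℕ, U.index = p ^ m)
    {N : Subgroup G} (hN : IsOpen (N : Set G)) : ∃ m : ℕ, g ^ (p ^ m) ∈ N := by
  -- the closure of `⟨g⟩` is abelian, so all its subgroups are normal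
  let _ := (Subgroup.zpowers g).commGroupTopologicalClosure mul_comm'
  let U := N.subgroupOf (Subgroup.zpowers g).topologicalClosure
  obtain ⟨m, hm⟩ := hproP U (hN.preimage continuous_subtype_val) inferInstance
  have := U.pow_index_mem ⟨g, Subgroup.le_topologicalClosure _ (Subgroup.mem_zpowers g)⟩
  rw [hm, Subgroup.mem_subgroupOf] at this
  exact ⟨m, this⟩

theorem exists_extension_of_conj_invariant_irreducible_general
    {G : Type*} [Group G] [TopologicalSpace G] [IsTopologicalGroup G]
    [T2Space G]
    {k V : Type*} [Field k] [IsAlgClosed k]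
    [AddCommGroup V] [Module k V] [FiniteDimensional k V]
    (p : ℕ) (hp : p.Prime)
    (H : Subgroup G) (hHopen : IsOpen (H : Set G)) (hHnorm : H.Normal)
    (g : G)
    (hproP : ∀ U : Subgroup ((Subgroup.zpowers g).topologicalClosure),
      IsOpen (U : Set ((Subgroup.zpowers g).topologicalClosure)) → U.Normal →
        ∃ m : ℕ, U.index = p ^ m)
    (η : H →* (V →ₗ[k] V)ˣ)
    (hηker : IsOpen ((η.ker : Set H)))
    (hηirr : ∀ W : Submodule k V,
      (∀ (h : H) (v : V), v ∈ W → (η h : V →ₗ[k] V) v ∈ W) → W = ⊥ ∨ W = ⊤)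
    (hconj : ∃ A : (V →ₗ[k] V)ˣ, ∀ (x : G) (hx : x ∈ H),
      η ⟨g * x * g⁻¹, hHnorm.conj_mem x hx g⟩ = A * η ⟨x, hx⟩ * A⁻¹) :
    ∃ ηt : ((Subgroup.closure ((H : Set G) ∪ {g})).topologicalClosure) →* (V →ₗ[k] V)ˣ,
      IsOpen ((ηt.ker : Set ((Subgroup.closure ((H : Set G) ∪ {g})).topologicalClosure))) ∧
      (∀ W : Submodule k V,
        (∀ (t : (Subgroup.closure ((H : Set G) ∪ {g})).topologicalClosure) (v : V),
          v ∈ W → (ηt t : V →ₗ[k] V) v ∈ W) → W = ⊥ ∨ W = ⊤) ∧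
      (∃ B : (V →ₗ[k] V)ˣ, ∀ (x : G) (hx : x ∈ H),
        ηt ⟨x, (Subgroup.le_topologicalClosure _)
            (Subgroup.subset_closure (Set.mem_union_left _ hx))⟩ =
          B * η ⟨x, hx⟩ * B⁻¹) ∧
      (∃ m : ℕ,
        (ηt ⟨g, (Subgroup.le_topologicalClosure _)
            (Subgroup.subset_closure (Set.mem_union_right _ rfl))⟩) ^ (p ^ m) = 1) := by
  obtain ⟨A₀, hA₀⟩ := hconj
  have hker : IsOpen ((η.ker.map H.subtype : Subgroup G) : Set G) := by
    rw [Subgroup.coe_map, Subgroup.coe_subtype]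
    exact hHopen.isOpenMap_subtype_val _ hηker
  obtain ⟨m, ⟨⟨_, hgm⟩, hgm1, rfl⟩⟩ := exists_pow_pow_mem_of_isOpen hproP hker
  obtain ⟨A, hA, hpow⟩ := exists_intertwiner_map_zpow_eq η hηirr (A₀ := A₀)
    (fun x => hA₀ x x.2) (pow_ne_zero m hp.ne_zero) hgm
  obtain ⟨ψ, hψH, hψg⟩ := exists_extension_to_closure_union_singleton η A hA hpow
  have hKopen : IsOpen (Subgroup.closure ((H : Set G) ∪ {g}) : Set G) :=
    Subgroup.isOpen_mono (fun x hx => Subgroup.subset_closure (Set.mem_union_left _ hx)) hHopen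
  have hK := Subgroup.topologicalClosure_minimal _ le_rfl (Subgroup.isClosed_of_isOpen _ hKopen)
  set ηt := ψ.comp (Subgroup.inclusion hK)
  have hηtH : ∀ x : H, ηt ⟨x, Subgroup.le_topologicalClosure _
      (Subgroup.subset_closure (Set.mem_union_left _ x.2))⟩ = η x := hψH
  refine ⟨ηt, ?_, fun W hW => hηirr W fun h v hv => ?_, ⟨1, fun x hx => ?_⟩, ⟨m, ?_⟩⟩
  · refine Subgroup.isOpen_mono (H₁ := (η.ker.map H.subtype).subgroupOf _) ?_
      (hker.preimage continuous_subtype_val)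
    rintro x ⟨y, hy1, hyx⟩
    rw [MonoidHom.mem_ker, show x = ⟨y, Subgroup.le_topologicalClosure _
      (Subgroup.subset_closure (Set.mem_union_left _ y.2))⟩ from Subtype.ext hyx.symm, hηtH]
    exact hy1
  · simpa only [hηtH] using hW ⟨h, Subgroup.le_topologicalClosure _
      (Subgroup.subset_closure (Set.mem_union_left _ h.2))⟩ v hv
  · rw [hηtH ⟨x, hx⟩, one_mul, inv_one, mul_one]
  · change ψ ⟨g, _⟩ ^ p ^ m = 1
    rw [hψg, ← zpow_natCast, ← hpow _ (by rwa [zpow_natCast])]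
    simpa only [zpow_natCast] using MonoidHom.mem_ker.mp hgm1

/-- Extension of an irreducible conjugation-stable representation along an element of pro-`p`
order (Lemma on extending representations).  `G` is a profinite group, `H` an open normal
subgroup, `g ∈ G` an element of pro-`p` order (the topological closure `P` of `⟨g⟩` is pro-`p`:
every open normal subgroup of `P` has `p`-power index), and `(η, V)` a finite-dimensional
irreducible representation of `H` over an algebraically closed field of characteristic `0`
with open kernel, with `η (g · g⁻¹) ≅ η`.  Then `η` extends to an irreducible representation
`η̃`, with open kernel, of the closed subgroup generated by `H` and `g`, whose restriction to
`H` is isomorphic to `η`, and `η̃ (g)` can be chosen of finite `p`-power order. -/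
theorem exists_extension_of_conj_invariant_irreducible
    {G : Type*} [Group G] [TopologicalSpace G] [IsTopologicalGroup G]
    [CompactSpace G] [TotallyDisconnectedSpace G] [T2Space G]
    {k V : Type*} [Field k] [IsAlgClosed k] [CharZero k]
    [AddCommGroup V] [Module k V] [FiniteDimensional k V]
    (p : ℕ) (hp : p.Prime)
    (H : Subgroup G) (hHopen : IsOpen (H : Set G)) (hHnorm : H.Normal)
    (g : G)
    (hproP : ∀ U : Subgroup ((Subgroup.zpowers g).topologicalClosure),
      IsOpen (U : Set ((Subgroup.zpowers g).topologicalClosure)) → U.Normal →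
        ∃ m : ℕ, U.index = p ^ m)
    (η : H →* (V →ₗ[k] V)ˣ)
    (hηker : IsOpen ((η.ker : Set H)))
    (hηirr : ∀ W : Submodule k V,
      (∀ (h : H) (v : V), v ∈ W → (η h : V →ₗ[k] V) v ∈ W) → W = ⊥ ∨ W = ⊤)
    (hconj : ∃ A : (V →ₗ[k] V)ˣ, ∀ (x : G) (hx : x ∈ H),
      η ⟨g * x * g⁻¹, hHnorm.conj_mem x hx g⟩ = A * η ⟨x, hx⟩ * A⁻¹) :
    ∃ ηt : ((Subgroup.closure ((H : Set G) ∪ {g})).topologicalClosure) →* (V →ₗ[k] V)ˣ,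
      IsOpen ((ηt.ker : Set ((Subgroup.closure ((H : Set G) ∪ {g})).topologicalClosure))) ∧
      (∀ W : Submodule k V,
        (∀ (t : (Subgroup.closure ((H : Set G) ∪ {g})).topologicalClosure) (v : V),
          v ∈ W → (ηt t : V →ₗ[k] V) v ∈ W) → W = ⊥ ∨ W = ⊤) ∧
      (∃ B : (V →ₗ[k] V)ˣ, ∀ (x : G) (hx : x ∈ H),
        ηt ⟨x, (Subgroup.le_topologicalClosure _)
            (Subgroup.subset_closure (Set.mem_union_left _ hx))⟩ =
          B * η ⟨x, hx⟩ * B⁻¹) ∧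
      (∃ m : ℕ,
        (ηt ⟨g, (Subgroup.le_topologicalClosure _)
            (Subgroup.subset_closure (Set.mem_union_right _ rfl))⟩) ^ (p ^ m) = 1) :=
  exists_extension_of_conj_invariant_irreducible_general p hp H hHopen hHnorm g hproP η hηker hηirr
    hconj
end

section
/- Let Γ be a compact topological group, k a complete non-archimedean field, and T : Γ → k a continuous function that is the trace of a continuous semisimple representation ρ : Γ → GL_n(k̄). If T' : Γ → k is the trace of another continuous semisimple representation ρ' : Γ → GL_n(k̄) and T = T', then ρ ≅ ρ'. -/
/-!
Let `A` be a `k`-algebra (here `k[Γ]`) and `M`, `N` finite-dimensional semisimple `A`-modules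
with the same character. For a simple module `S`, the projection of `M × N` onto its
`S`-isotypic component commutes with every endomorphism, so by Jacobson density it is the action
of some `a ∈ A`. The trace of `a` on `M` (resp. `N`) is the dimension of the `S`-isotypic
component of `M` (resp. `N`), so in characteristic zero these dimensions agree. Hence every simple
submodule of `M` also occurs in `N`; splitting it off on both sides, `M ≅ N` follows by induction
on the dimension.
-/

open Module LinearMap

instance IsSemisimpleModule.prod {R M N : Type*} [Ring R] [AddCommGroup M] [Module R M]
    [AddCommGroup N] [Module R N] [IsSemisimpleModule R M] [IsSemisimpleModule R N] :
    IsSemisimpleModule R (M × N) :=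
  have : IsSemisimpleModule R (⊤ : Submodule R (M × N)) := by
    rw [← sup_range_inl_inr]
    exact .sup (.range _) (.range _)
  .congr Submodule.topEquiv.symm

instance Submodule.finiteDimensional_of_isScalarTower {k A M : Type*} [Field k] [Ring A]
    [Algebra k A] [AddCommGroup M] [Module A M] [Module k M] [IsScalarTower k A M]
    [FiniteDimensional k M] (p : Submodule A M) : FiniteDimensional k p :=
  .of_injective (p.subtype.restrictScalars k) p.injective_subtype

section Isotypic

variable {R M : Type*} [Ring R] [AddCommGroup M] [Module R M]

theorem exists_linearEquiv_of_isotypicComponent_ne_bot {S : Type*} [AddCommGroup S]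
    [Module R S] (h : isotypicComponent R M S ≠ ⊥) :
    ∃ m : Submodule R M, Nonempty (m ≃ₗ[R] S) := by
  contrapose! h
  exact sSup_eq_bot.mpr fun m hm => isEmptyElim hm.some

variable [IsSemisimpleModule R M]

theorem IsSemisimpleModule.exists_commute_isProj_isotypicComponent (S : Type*) [AddCommGroup S]
    [Module R S] [IsSimpleModule R S] :
    ∃ f : Module.End R M, (∀ φ, Commute f φ) ∧ IsProj (isotypicComponent R M S) f := by
  classical
  by_cases hS : isotypicComponent R M S = ⊥
  · exact ⟨0, .zero_left, ⟨fun _ => by simp, fun x hx => by simp_all⟩⟩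
  obtain ⟨m, ⟨e⟩⟩ := exists_linearEquiv_of_isotypicComponent_ne_bot hS
  have := IsSimpleModule.congr e
  let c : isotypicComponents R M := ⟨_, m, this, e.isotypicComponent_eq.symm⟩
  -- `f` is the unit of the factor `End R c` of `End R M ≃ Π c', End R c'`, hence central.
  let E := endRingEquiv R M
  let f := E.symm (Pi.single c 1)
  have hf : ∀ c' : isotypicComponents R M, ∀ x ∈ c'.1, f x = if c' = c then x else 0 := by
    intro c' x hx
    rw [show f x = _ from congr(($(E.apply_symm_apply (Pi.single c 1)) c' ⟨x, hx⟩ : M))]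
    split_ifs with hc
    · subst hc; simp
    · simp [Pi.single_eq_of_ne hc]
  refine ⟨f, fun φ => E.injective ?_, ⟨fun x => ?_, fun x hx => by simpa using hf c x hx⟩⟩
  · rw [map_mul, map_mul, E.apply_symm_apply]
    ext c' : 1
    by_cases hc : c' = c
    · subst hc; simp
    · simp [Pi.single_eq_of_ne hc]
  · suffices ⊤ ≤ (isotypicComponent R M S).comap f from this trivial
    rw [← sSup_isotypicComponents, sSup_le_iff]
    intro c' hc' y hy
    rw [Submodule.mem_comap, hf ⟨c', hc'⟩ y hy]
    split_ifs with hc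
    · have hc : c' = isotypicComponent R M S := congrArg Subtype.val hc
      exact hc ▸ hy
    · exact zero_mem _

end Isotypic

/-- Jacobson density: `P` is finite over `End A P` because it is finite over `k`. -/
theorem IsSemisimpleModule.exists_smul_eq_of_forall_commute (k : Type*) {A P : Type*}
    [CommSemiring k] [Ring A] [Algebra k A] [AddCommGroup P] [Module A P] [Module k P]
    [IsScalarTower k A P] [Module.Finite k P] [IsSemisimpleModule A P] (f : Module.End A P)
    (hf : ∀ φ : Module.End A P, Commute f φ) : ∃ a : A, ∀ x, a • x = f x := by
  have : Module.Finite (Module.End A P) P := .of_restrictScalars_finite k _ _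
  obtain ⟨a, ha⟩ := Module.Finite.toModuleEnd_moduleEnd_surjective (R := A) (M := P)
    { toFun := f, map_add' := f.map_add, map_smul' := fun φ x => congr($(hf φ) x) }
  exact ⟨a, fun x => congr($ha x)⟩

section Projection

variable {k A : Type*} [Field k] [Ring A] [Algebra k A]
  {M P : Type*} [AddCommGroup M] [Module A M] [Module k M] [IsScalarTower k A M]
  [AddCommGroup P] [Module A P] [Module k P] [IsScalarTower k A P]
  (S : Type*) [AddCommGroup S] [Module A S] [IsSimpleModule A S]

theorem exists_isProj_isotypicComponent_lsmul [FiniteDimensional k P] [IsSemisimpleModule A P] :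
    ∃ a : A, IsProj ((isotypicComponent A P S).restrictScalars k) (Algebra.lsmul k k P a) := by
  obtain ⟨f, hcomm, hproj⟩ :=
    IsSemisimpleModule.exists_commute_isProj_isotypicComponent (R := A) (M := P) S
  obtain ⟨a, ha⟩ := IsSemisimpleModule.exists_smul_eq_of_forall_commute k f hcomm
  refine ⟨a, ⟨fun x => ?_, fun x hx => (ha x).trans (hproj.map_id x hx)⟩⟩
  rw [Algebra.lsmul_apply, ha]
  exact hproj.map_mem x

variable {S}

theorem LinearMap.IsProj.isotypicComponent_of_injective [IsSemisimpleModule A M] {a : A}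
    (h : IsProj ((isotypicComponent A P S).restrictScalars k) (Algebra.lsmul k k P a))
    {g : M →ₗ[A] P} (hg : Function.Injective g) :
    IsProj ((isotypicComponent A M S).restrictScalars k) (Algebra.lsmul k k M a) := by
  have hcomap : (isotypicComponent A P S).comap g ≤ isotypicComponent A M S :=
    le_isotypicComponent_iff.mpr <| (IsIsotypicOfType.isotypicComponent A P S).of_injective
      (g.restrict fun _ hx => hx) fun x y hxy => Subtype.ext (hg congr(($hxy : P)))
  refine ⟨fun x => hcomap ?_, fun x hx => hg ?_⟩
  · simpa using h.map_mem (g x)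
  · simpa using h.map_id (g x) (LinearMap.le_comap_isotypicComponent S g hx)

end Projection

namespace Module

section Character

variable (k A : Type*) [Field k] [Ring A] [Algebra k A]
  (M N : Type*) [AddCommGroup M] [Module A M] [Module k M] [IsScalarTower k A M]
  [AddCommGroup N] [Module A N] [Module k N] [IsScalarTower k A N]

noncomputable def character : A →ₗ[k] k :=
  trace k M ∘ₗ (Algebra.lsmul k k M).toLinearMap

theorem character_apply (a : A) : character k A M a = trace k M (Algebra.lsmul k k M a) :=
  rfl

variable {k A M N}

theorem character_eq_of_linearEquiv (e : M ≃ₗ[A] N) : character k A M = character k A N := by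
  ext a
  rw [character_apply, character_apply, ← trace_conj' _ (e.restrictScalars k)]
  congr 1
  ext x
  simp

variable [FiniteDimensional k M] [FiniteDimensional k N]

theorem character_prod : character k A (M × N) = character k A M + character k A N := by
  ext a
  have : Algebra.lsmul k k (M × N) a = (Algebra.lsmul k k M a).prodMap (Algebra.lsmul k k N a) :=
    rfl
  simp only [character_apply, this, trace_prodMap', LinearMap.add_apply]

theorem character_eq_add_of_isCompl {p q : Submodule A M} (h : IsCompl p q) :
    character k A M = character k A p + character k A q := by
  rw [← character_prod, character_eq_of_linearEquiv (Submodule.prodEquivOfIsCompl p q h)]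

theorem character_one : character k A M 1 = finrank k M := by
  rw [character_apply, map_one, trace_one]

variable [CharZero k]

theorem finrank_eq_of_character_eq (h : character k A M = character k A N) :
    finrank k M = finrank k N := by
  have h1 := congr($h 1)
  rwa [character_one, character_one, Nat.cast_inj] at h1

variable [IsSemisimpleModule A M] [IsSemisimpleModule A N]

theorem finrank_isotypicComponent_eq_of_character_eq (h : character k A M = character k A N)
    (S : Type*) [AddCommGroup S] [Module A S] [IsSimpleModule A S] :
    finrank k (isotypicComponent A M S) = finrank k (isotypicComponent A N S) := by
  obtain ⟨a, ha⟩ := exists_isProj_isotypicComponent_lsmul (k := k) (A := A) (P := M × N) S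
  have hχ := congr($h a)
  rwa [character_apply, character_apply, (ha.isotypicComponent_of_injective inl_injective).trace,
    (ha.isotypicComponent_of_injective inr_injective).trace, Nat.cast_inj] at hχ

theorem exists_linearEquiv_of_character_eq (h : character k A M = character k A N)
    (S : Submodule A M) [IsSimpleModule A S] : ∃ T : Submodule A N, Nonempty (T ≃ₗ[A] S) := by
  have hM : 0 < finrank k (isotypicComponent A M S) :=
    have := Submodule.nontrivial_iff_ne_bot.mpr (bot_lt_isotypicComponent S).ne'
    finrank_pos
  rw [finrank_isotypicComponent_eq_of_character_eq h S] at hM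
  have := Module.nontrivial_of_finrank_pos hM
  exact exists_linearEquiv_of_isotypicComponent_ne_bot (Submodule.nontrivial_iff_ne_bot.mp this)

theorem nonempty_linearEquiv_of_character_eq (h : character k A M = character k A N) :
    Nonempty (M ≃ₗ[A] N) := by
  induction hn : finrank k M using Nat.strong_induction_on generalizing M N with
  | _ n ih =>
  rcases subsingleton_or_nontrivial M with hM | hM
  · have : Subsingleton N := finrank_zero_iff.mp <|
      (finrank_eq_of_character_eq h).symm.trans finrank_zero_of_subsingleton
    exact ⟨.ofSubsingleton M N⟩
  obtain ⟨S, hS⟩ := IsSemisimpleModule.exists_simple_submodule A M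
  obtain ⟨T, ⟨e⟩⟩ := exists_linearEquiv_of_character_eq h S
  obtain ⟨M₁, hM₁⟩ := exists_isCompl S
  obtain ⟨N₁, hN₁⟩ := exists_isCompl T
  have h₁ : character k A M₁ = character k A N₁ := by
    rw [character_eq_add_of_isCompl hM₁, character_eq_add_of_isCompl hN₁,
      character_eq_of_linearEquiv e] at h
    exact add_left_cancel h
  have hlt : finrank k M₁ < n := by
    have hS : 0 < finrank k S := have := hS.nontrivial; finrank_pos
    have := ((Submodule.prodEquivOfIsCompl S M₁ hM₁).restrictScalars k).finrank_eq
    rw [finrank_prod] at this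
    omega
  obtain ⟨e₁⟩ := ih _ hlt h₁ rfl
  exact ⟨(Submodule.prodEquivOfIsCompl S M₁ hM₁).symm ≪≫ₗ e.symm.prodCongr e₁ ≪≫ₗ
    Submodule.prodEquivOfIsCompl T N₁ hN₁⟩

end Character

theorem character_asModule_single {k G V : Type*} [Field k] [Monoid G] [AddCommGroup V]
    [Module k V] (ρ : Representation k G V) (g : G) :
    character k (MonoidAlgebra k G) ρ.asModule (MonoidAlgebra.single g 1) = ρ.character g := by
  rw [character_apply, Representation.character]
  congr 1
  ext v
  rw [Algebra.lsmul_apply, Representation.single_smul, one_smul]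
  rfl

end Module

theorem semisimple_rep_eq_of_trace_eq_general
    {k Γ V V' : Type*} [Field k] [CharZero k] [Group Γ]
    [AddCommGroup V] [Module k V] [FiniteDimensional k V]
    [AddCommGroup V'] [Module k V'] [FiniteDimensional k V']
    (ρ : Representation k Γ V) (ρ' : Representation k Γ V')
    (hss : IsSemisimpleModule (MonoidAlgebra k Γ) ρ.asModule)
    (hss' : IsSemisimpleModule (MonoidAlgebra k Γ) ρ'.asModule)
    (htr : ∀ g : Γ, LinearMap.trace k V (ρ g) = LinearMap.trace k V' (ρ' g)) :
    ∃ e : V ≃ₗ[k] V', ∀ (g : Γ) (v : V), e (ρ g v) = ρ' g (e v) := by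
  have hχ : character k (MonoidAlgebra k Γ) ρ.asModule = character k _ ρ'.asModule :=
    MonoidAlgebra.lhom_ext' fun g => LinearMap.ext_ring <| by
      simpa [character_asModule_single, Representation.character] using htr g
  obtain ⟨E⟩ := nonempty_linearEquiv_of_character_eq hχ
  exact ⟨E.restrictScalars k,
    ((Representation.IntertwiningMap.equivLinearMapAsModule ρ ρ').symm E.toLinearMap).isIntertwining⟩

/-- Brauer–Nesbitt: two semisimple finite-dimensional representations of a group over an
algebraically closed field of characteristic zero with equal characters are isomorphic. -/
theorem semisimple_rep_eq_of_trace_eq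
    {k Γ V V' : Type*} [Field k] [IsAlgClosed k] [CharZero k] [Group Γ]
    [AddCommGroup V] [Module k V] [FiniteDimensional k V]
    [AddCommGroup V'] [Module k V'] [FiniteDimensional k V']
    (ρ : Representation k Γ V) (ρ' : Representation k Γ V')
    (hss : IsSemisimpleModule (MonoidAlgebra k Γ) ρ.asModule)
    (hss' : IsSemisimpleModule (MonoidAlgebra k Γ) ρ'.asModule)
    (n : ℕ) (hV : Module.finrank k V = n) (hV' : Module.finrank k V' = n)
    (htr : ∀ g : Γ, LinearMap.trace k V (ρ g) = LinearMap.trace k V' (ρ' g)) :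
    ∃ e : V ≃ₗ[k] V', ∀ (g : Γ) (v : V), e (ρ g v) = ρ' g (e v) :=
  semisimple_rep_eq_of_trace_eq_general ρ ρ' hss hss' htr
end
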